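/- Let X be an Archimedean vector lattice admitting a positively homogeneous continuous function calculus, let m ∈ ℕ, and suppose that (x_k^1)_k, …, (x_k^m)_k are sequences in X which converge uniformly to x^1, …, x^m, respectively. Then for every h ∈ ℋ_m the sequence (h(x_k^1,…,x_k^m))_k converges uniformly to h(x^1,…,x^m). -/

import Mathlib

/-- A function `h : ℝ^m → ℝ` belongs to `ℋ_m` iff it is continuous and positively
homogeneous. -/
def IsPHC {m : ℕ} (h : (Fin m → ℝ) → ℝ) : Prop :=
  Continuous h ∧ ∀ (c : ℝ), 0 ≤ c → ∀ t : Fin m → ℝ, h (c • t) = c * h t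

/-- A sequence `(x_k)` in a vector lattice converges uniformly to `x` if there is a positive
regulator `e` such that for every `ε > 0` one has `|x_k − x| ≤ ε • e` eventually. -/
def UnifConv {X : Type*} [Lattice X] [AddCommGroup X] [Module ℝ X]
    (x : ℕ → X) (x' : X) : Prop :=
  ∃ e : X, 0 ≤ e ∧ ∀ ε : ℝ, 0 < ε → ∃ k₀ : ℕ, ∀ k ≥ k₀, |x k - x'| ≤ ε • e

/-!
For the `h ∈ ℋ_m` on which the calculus is Lipschitz, `|h(y) - h(z)| ≤ C ∑ⱼ |yⱼ - zⱼ|`,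
uniform convergence is clearly preserved, with regulator `C ∑ⱼ eⱼ`. These `h` form a vector
sublattice of `ℋ_m` containing the coordinate projections, so by the lattice Stone–Weierstrass
theorem on the compact `ℓ¹`-unit sphere, extended by positive homogeneity, every `h ∈ ℋ_m` is
within `ε ∑ⱼ |tⱼ|` of one of them. The calculus is monotone and sends `∑ⱼ |tⱼ|` to
`∑ⱼ |xⱼ|`, so the error this introduces is at most `ε ∑ⱼ |xⱼ|`, which is uniformly small along
the sequence.
-/

open Finset Filter

section PositivelyHomogeneous

variable {m : ℕ}

lemma isPHC_zero : IsPHC (0 : (Fin m → ℝ) → ℝ) :=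
  ⟨continuous_const, fun _ _ _ => by simp⟩

lemma isPHC_apply (j : Fin m) : IsPHC fun t : Fin m → ℝ => t j :=
  ⟨continuous_apply j, fun _ _ _ => rfl⟩

lemma isPHC_sum_abs : IsPHC fun t : Fin m → ℝ => ∑ j, |t j| :=
  ⟨continuous_finsetSum _ fun j _ => (continuous_apply j).abs, fun c hc t => by
    simp [abs_mul, abs_of_nonneg hc, mul_sum]⟩

variable {f g : (Fin m → ℝ) → ℝ}

lemma IsPHC.add (hf : IsPHC f) (hg : IsPHC g) : IsPHC (f + g) :=
  ⟨hf.1.add hg.1, fun c hc t => by simp [hf.2 c hc t, hg.2 c hc t, mul_add]⟩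

lemma IsPHC.smul (hf : IsPHC f) (a : ℝ) : IsPHC (a • f) :=
  ⟨hf.1.const_smul a, fun c hc t => by simp [hf.2 c hc t, mul_left_comm]⟩

lemma IsPHC.neg (hf : IsPHC f) : IsPHC (-f) := by
  simpa using hf.smul (-1)

lemma IsPHC.sub (hf : IsPHC f) (hg : IsPHC g) : IsPHC (f - g) := by
  simpa only [sub_eq_add_neg] using hf.add hg.neg

lemma IsPHC.sup (hf : IsPHC f) (hg : IsPHC g) : IsPHC (f ⊔ g) :=
  ⟨hf.1.sup hg.1, fun c hc t => by simp [hf.2 c hc t, hg.2 c hc t, mul_max_of_nonneg _ _ hc]⟩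

lemma IsPHC.abs (hf : IsPHC f) : IsPHC |f| :=
  hf.sup hf.neg

lemma IsPHC.sum {ι : Type*} {s : Finset ι} {f : ι → (Fin m → ℝ) → ℝ}
    (hf : ∀ i ∈ s, IsPHC (f i)) : IsPHC (∑ i ∈ s, f i) := by
  classical
  induction s using Finset.induction_on with
  | empty => simpa using isPHC_zero
  | insert i s hi ih =>
    rw [sum_insert hi]
    exact (hf i (mem_insert_self i s)).add (ih fun j hj => hf j (mem_insert_of_mem hj))

lemma fun_sum_abs_eq_sum_abs_apply :
    (fun t : Fin m → ℝ => ∑ j, |t j|) = ∑ j, |fun t : Fin m → ℝ => t j| := by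
  ext t; simp

lemma IsPHC.map_zero (hf : IsPHC f) : f 0 = 0 := by
  simpa using hf.2 0 le_rfl 0

end PositivelyHomogeneous

section Approximation

variable {m : ℕ}

def l1Sphere (m : ℕ) : Set (Fin m → ℝ) :=
  {t | ∑ j, |t j| = 1}

lemma isCompact_l1Sphere : IsCompact (l1Sphere m) := by
  refine Metric.isCompact_of_isClosed_isBounded (isClosed_eq isPHC_sum_abs.1 continuous_const)
    ((Metric.isBounded_closedBall (x := 0) (r := 1)).subset fun t (ht : ∑ j, |t j| = 1) => ?_)
  rw [mem_closedBall_zero_iff, pi_norm_le_iff_of_nonneg zero_le_one]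
  intro j
  rw [Real.norm_eq_abs, ← ht]
  exact single_le_sum (fun i _ => abs_nonneg (t i)) (mem_univ j)

lemma IsPHC.abs_le_of_forall_mem_l1Sphere {f : (Fin m → ℝ) → ℝ} (hf : IsPHC f) {ε : ℝ}
    (hε : ∀ z ∈ l1Sphere m, |f z| ≤ ε) (t : Fin m → ℝ) : |f t| ≤ ε * ∑ j, |t j| := by
  rcases (sum_nonneg fun j _ => abs_nonneg (t j) : 0 ≤ ∑ j, |t j|).eq_or_lt with hr | hr
  · have ht : t = 0 := funext fun j =>
      abs_eq_zero.1 ((sum_eq_zero_iff_of_nonneg fun i _ => abs_nonneg (t i)).1 hr.symm j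
        (mem_univ j))
    rw [← hr, mul_zero, ht, hf.map_zero, abs_zero]
  set r := ∑ j, |t j|
  have hz : r⁻¹ • t ∈ l1Sphere m := by
    simp [l1Sphere, abs_mul, ← mul_sum, abs_of_pos hr, inv_mul_cancel₀ hr.ne', r]
  calc |f t| = |f (r • r⁻¹ • t)| := by rw [smul_inv_smul₀ hr.ne']
    _ = r * |f (r⁻¹ • t)| := by rw [hf.2 r hr.le, abs_mul, abs_of_pos hr]
    _ ≤ r * ε := by gcongr; exact hε _ hz
    _ = ε * r := mul_comm r ε

variable {L : Submodule ℝ ((Fin m → ℝ) → ℝ)}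

def Submodule.restrictL1Sphere (L : Submodule ℝ ((Fin m → ℝ) → ℝ)) :
    Set C(l1Sphere m, ℝ) :=
  {F | ∃ f ∈ L, ∀ z, F z = f z}

lemma Submodule.mem_restrictL1Sphere (hL : ∀ f ∈ L, IsPHC f) {f : (Fin m → ℝ) → ℝ}
    (hf : f ∈ L) : ⟨fun z => f z, (hL f hf).1.comp continuous_subtype_val⟩ ∈ L.restrictL1Sphere :=
  ⟨f, hf, fun _ => rfl⟩

lemma Submodule.separatesPointsStrongly_restrictL1Sphere (hL : ∀ f ∈ L, IsPHC f)
    (hproj : ∀ j, (fun u : Fin m → ℝ => u j) ∈ L)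
    (hnorm : (fun u : Fin m → ℝ => ∑ j, |u j|) ∈ L) :
    L.restrictL1Sphere.SeparatesPointsStrongly := by
  rintro v ⟨s, hs⟩ ⟨t, ht⟩
  suffices ∃ f ∈ L, f s = v ⟨s, hs⟩ ∧ f t = v ⟨t, ht⟩ by
    obtain ⟨f, hf, hfs, hft⟩ := this
    exact ⟨_, L.mem_restrictL1Sphere hL hf, hfs, hft⟩
  replace hs : ∑ j, |s j| = 1 := hs
  replace ht : ∑ j, |t j| = 1 := ht
  by_cases hst : s = t
  · subst hst
    exact ⟨v ⟨s, hs⟩ • fun u => ∑ j, |u j|, L.smul_mem _ hnorm, by simp [hs], by simp [hs]⟩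
  -- On the sphere `∑ⱼ |uⱼ|` is the constant `1`; together with a coordinate `uⱼ` on which
  -- `s` and `t` differ it interpolates any two values.
  obtain ⟨j, hj⟩ := Function.ne_iff.1 hst
  have hj' : s j - t j ≠ 0 := sub_ne_zero.2 hj
  set b := (v ⟨s, hs⟩ - v ⟨t, ht⟩) / (s j - t j)
  refine ⟨(v ⟨s, hs⟩ - b * s j) • (fun u => ∑ j, |u j|) + b • fun u => u j,
    L.add_mem (L.smul_mem _ hnorm) (L.smul_mem _ (hproj j)), ?_, ?_⟩
  · simp [hs]
  · simp only [Pi.add_apply, Pi.smul_apply, smul_eq_mul, ht, b]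
    field_simp
    ring

lemma IsPHC.exists_mem_abs_sub_le (hL : ∀ f ∈ L, IsPHC f)
    (hsup : ∀ f ∈ L, ∀ g ∈ L, f ⊔ g ∈ L) (hproj : ∀ j, (fun t : Fin m → ℝ => t j) ∈ L)
    {h : (Fin m → ℝ) → ℝ} (hh : IsPHC h) {ε : ℝ} (hε : 0 < ε) :
    ∃ p ∈ L, ∀ t, |h t - p t| ≤ ε * ∑ j, |t j| := by
  have hinf : ∀ f ∈ L, ∀ g ∈ L, f ⊓ g ∈ L := fun f hf g hg => by
    simpa [neg_sup] using L.neg_mem (hsup _ (L.neg_mem hf) _ (L.neg_mem hg))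
  have hnorm : (fun t : Fin m → ℝ => ∑ j, |t j|) ∈ L := by
    rw [fun_sum_abs_eq_sum_abs_apply]
    exact L.sum_mem fun j _ => hsup _ (hproj j) _ (L.neg_mem (hproj j))
  have : CompactSpace (l1Sphere m) := isCompact_iff_compactSpace.1 isCompact_l1Sphere
  have hdense := ContinuousMap.sublattice_closure_eq_top L.restrictL1Sphere
    ⟨_, L.mem_restrictL1Sphere hL L.zero_mem⟩
    (fun _ ⟨f, hf, hfF⟩ _ ⟨g, hg, hgG⟩ => ⟨f ⊓ g, hinf f hf g hg, fun z => by simp [hfF, hgG]⟩)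
    (fun _ ⟨f, hf, hfF⟩ _ ⟨g, hg, hgG⟩ => ⟨f ⊔ g, hsup f hf g hg, fun z => by simp [hfF, hgG]⟩)
    (L.separatesPointsStrongly_restrictL1Sphere hL hproj hnorm)
  let hS : C(l1Sphere m, ℝ) := ⟨fun z => h z, hh.1.comp continuous_subtype_val⟩
  have hhS : hS ∈ closure L.restrictL1Sphere := by rw [hdense]; trivial
  obtain ⟨F, ⟨p, hp, hpF⟩, hdist⟩ := Metric.mem_closure_iff.1 hhS ε hε
  refine ⟨p, hp, (hh.sub (hL p hp)).abs_le_of_forall_mem_l1Sphere fun z hz => ?_⟩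
  have := ContinuousMap.dist_apply_le_dist (f := hS) (g := F) ⟨z, hz⟩
  rw [Real.dist_eq, hpF] at this
  exact (this.trans_lt hdist).le

end Approximation

section VectorLattice

variable {X : Type*} [Lattice X] [AddCommGroup X]

lemma abs_sup_sub_sup_le_add [IsOrderedAddMonoid X] (a b c d : X) :
    |a ⊔ b - c ⊔ d| ≤ |a - c| + |b - d| :=
  calc |a ⊔ b - c ⊔ d| = |(a ⊔ b - c ⊔ b) + (b ⊔ c - d ⊔ c)| := by
        rw [sup_comm b c, sup_comm d c, sub_add_sub_cancel]
    _ ≤ |a - c| + |b - d| :=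
        (abs_add_le _ _).trans (add_le_add (abs_sup_sub_sup_le_abs _ _ _)
          (abs_sup_sub_sup_le_abs _ _ _))

lemma abs_smul_le [Module ℝ X] [PosSMulMono ℝ X] (c : ℝ) (v : X) : |c • v| ≤ |c| • |v| := by
  have key : ∀ c : ℝ, 0 ≤ c → |c • v| ≤ c • |v| := fun c hc =>
    abs_le'.2 ⟨smul_le_smul_of_nonneg_left (le_abs_self v) hc,
      by simpa only [smul_neg] using smul_le_smul_of_nonneg_left (neg_le_abs v) hc⟩
  rcases le_total 0 c with hc | hc
  · simpa only [abs_of_nonneg hc] using key c hc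
  · simpa only [abs_of_nonpos hc, neg_smul, abs_neg] using key (-c) (neg_nonneg.2 hc)

end VectorLattice

section UniformConvergence

variable {X : Type*} [Lattice X] [AddCommGroup X] [Module ℝ X]

lemma unifConv_iff_eventually {x : ℕ → X} {x' : X} :
    UnifConv x x' ↔ ∃ e : X, 0 ≤ e ∧ ∀ ε : ℝ, 0 < ε → ∀ᶠ k in atTop, |x k - x'| ≤ ε • e := by
  simp only [UnifConv, eventually_atTop]

variable [IsOrderedAddMonoid X] {ι : Type*} [Fintype ι]
  {x : ι → ℕ → X} {x' : ι → X}

lemma unifConv_sum_abs_sub (hx : ∀ i, UnifConv (x i) (x' i)) :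
    UnifConv (fun k => ∑ i, |x i k - x' i|) 0 := by
  choose e he hxe using fun i => unifConv_iff_eventually.1 (hx i)
  refine unifConv_iff_eventually.2 ⟨∑ i, e i, sum_nonneg fun i _ => he i, fun ε hε => ?_⟩
  filter_upwards [eventually_all.2 fun i => hxe i ε hε] with k hk
  rw [sub_zero, abs_of_nonneg (sum_nonneg fun i _ => abs_nonneg _), smul_sum]
  exact sum_le_sum fun i _ => hk i

lemma unifConv_apply_of_abs_sub_le [PosSMulMono ℝ X] {F : (ι → X) → X}
    (hF : ∀ ε : ℝ, 0 < ε → ∃ C : ℝ, 0 ≤ C ∧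
      ∀ y z, |F y - F z| ≤ ε • ∑ i, |z i| + C • ∑ i, |y i - z i|)
    (hx : ∀ i, UnifConv (x i) (x' i)) :
    UnifConv (fun k => F fun i => x i k) (F x') := by
  obtain ⟨e, he, hxe⟩ := unifConv_iff_eventually.1 (unifConv_sum_abs_sub hx)
  refine unifConv_iff_eventually.2
    ⟨∑ i, |x' i| + e, add_nonneg (sum_nonneg fun i _ => abs_nonneg _) he, fun ε hε => ?_⟩
  obtain ⟨C, hC, hFC⟩ := hF ε hε
  filter_upwards [hxe (ε / (C + 1)) (by positivity)] with k hk
  rw [sub_zero, abs_of_nonneg (sum_nonneg fun i _ => abs_nonneg _)] at hk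
  have hCε : C * (ε / (C + 1)) ≤ ε := by
    rw [mul_div_assoc', div_le_iff₀ (by positivity)]
    nlinarith
  calc |F (fun i => x i k) - F x'|
      ≤ ε • ∑ i, |x' i| + C • ∑ i, |x i k - x' i| := hFC _ _
    _ ≤ ε • ∑ i, |x' i| + C • (ε / (C + 1)) • e := by gcongr
    _ ≤ ε • ∑ i, |x' i| + ε • e := by
        rw [smul_smul]
        gcongr
    _ = ε • (∑ i, |x' i| + e) := (smul_add _ _ _).symm

end UniformConvergence

structure IsPHCalculus {X : Type*} [Lattice X] [AddCommGroup X] [Module ℝ X] {m : ℕ}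
    (Φ : (Fin m → X) → ((Fin m → ℝ) → ℝ) → X) : Prop where
  map_add : ∀ x h g, IsPHC h → IsPHC g → Φ x (h + g) = Φ x h + Φ x g
  map_smul : ∀ x (c : ℝ) h, IsPHC h → Φ x (c • h) = c • Φ x h
  map_sup : ∀ x h g, IsPHC h → IsPHC g → Φ x (h ⊔ g) = Φ x h ⊔ Φ x g
  map_proj : ∀ x k, Φ x (fun t => t k) = x k

namespace IsPHCalculus

variable {X : Type*} [Lattice X] [AddCommGroup X] [Module ℝ X] {m : ℕ}
  {Φ : (Fin m → X) → ((Fin m → ℝ) → ℝ) → X} (hΦ : IsPHCalculus Φ) (y : Fin m → X)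
  {f g : (Fin m → ℝ) → ℝ}

include hΦ

lemma map_zero : Φ y 0 = 0 := by
  simpa using hΦ.map_smul y 0 0 isPHC_zero

lemma map_neg (hf : IsPHC f) : Φ y (-f) = -Φ y f := by
  simpa using hΦ.map_smul y (-1) f hf

lemma map_sub (hf : IsPHC f) (hg : IsPHC g) : Φ y (f - g) = Φ y f - Φ y g := by
  rw [sub_eq_add_neg, hΦ.map_add y _ _ hf hg.neg, hΦ.map_neg y hg, sub_eq_add_neg]

lemma map_abs (hf : IsPHC f) : Φ y |f| = |Φ y f| := by
  rw [abs, hΦ.map_sup y _ _ hf hf.neg, hΦ.map_neg y hf, abs]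

lemma map_mono (hf : IsPHC f) (hg : IsPHC g) (hfg : f ≤ g) : Φ y f ≤ Φ y g := by
  rw [← sup_eq_right.2 hfg, hΦ.map_sup y f g hf hg]
  exact le_sup_left

lemma map_sum {ι : Type*} (s : Finset ι) {f : ι → (Fin m → ℝ) → ℝ}
    (hf : ∀ i ∈ s, IsPHC (f i)) : Φ y (∑ i ∈ s, f i) = ∑ i ∈ s, Φ y (f i) := by
  classical
  induction s using Finset.induction_on with
  | empty => simpa using hΦ.map_zero y
  | insert i s hi ih =>
    have hs : ∀ j ∈ s, IsPHC (f j) := fun j hj => hf j (mem_insert_of_mem hj)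
    rw [sum_insert hi, sum_insert hi, hΦ.map_add y _ _ (hf i (mem_insert_self i s)) (.sum hs),
      ih hs]

lemma map_sum_abs : Φ y (fun t => ∑ j, |t j|) = ∑ j, |y j| := by
  rw [fun_sum_abs_eq_sum_abs_apply, hΦ.map_sum y _ fun j _ => (isPHC_apply j).abs]
  exact sum_congr rfl fun j _ => by rw [hΦ.map_abs y (isPHC_apply j), hΦ.map_proj]

lemma abs_map_sub_map_le (hf : IsPHC f) (hg : IsPHC g) {ε : ℝ}
    (hfg : ∀ t, |f t - g t| ≤ ε * ∑ j, |t j|) : |Φ y f - Φ y g| ≤ ε • ∑ j, |y j| := by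
  rw [← hΦ.map_sub y hf hg, ← hΦ.map_abs y (hf.sub hg), ← hΦ.map_sum_abs y,
    ← hΦ.map_smul y ε _ isPHC_sum_abs]
  exact hΦ.map_mono y (hf.sub hg).abs (isPHC_sum_abs.smul ε) fun t => by simpa using hfg t

omit y

variable [IsOrderedAddMonoid X] [PosSMulMono ℝ X]

def lipschitzSubmodule : Submodule ℝ ((Fin m → ℝ) → ℝ) where
  carrier := {f | IsPHC f ∧ ∃ C : ℝ, 0 ≤ C ∧ ∀ y z, |Φ y f - Φ z f| ≤ C • ∑ j, |y j - z j|}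
  zero_mem' := ⟨isPHC_zero, 0, le_rfl, fun y z => by simp [hΦ.map_zero]⟩
  add_mem' := by
    rintro f g ⟨hf, C, hC, hfC⟩ ⟨hg, D, hD, hgD⟩
    refine ⟨hf.add hg, C + D, add_nonneg hC hD, fun y z => ?_⟩
    rw [hΦ.map_add y f g hf hg, hΦ.map_add z f g hf hg, add_sub_add_comm, add_smul]
    exact (abs_add_le _ _).trans (add_le_add (hfC y z) (hgD y z))
  smul_mem' := by
    rintro c f ⟨hf, C, hC, hfC⟩
    refine ⟨hf.smul c, |c| * C, mul_nonneg (abs_nonneg c) hC, fun y z => ?_⟩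
    rw [hΦ.map_smul y c f hf, hΦ.map_smul z c f hf, ← smul_sub, mul_smul]
    exact (abs_smul_le c _).trans (smul_le_smul_of_nonneg_left (hfC y z) (abs_nonneg c))

lemma sup_mem_lipschitzSubmodule (hf : f ∈ hΦ.lipschitzSubmodule)
    (hg : g ∈ hΦ.lipschitzSubmodule) : f ⊔ g ∈ hΦ.lipschitzSubmodule := by
  obtain ⟨hf, C, hC, hfC⟩ := hf
  obtain ⟨hg, D, hD, hgD⟩ := hg
  refine ⟨hf.sup hg, C + D, add_nonneg hC hD, fun y z => ?_⟩
  rw [hΦ.map_sup y f g hf hg, hΦ.map_sup z f g hf hg, add_smul]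
  exact (abs_sup_sub_sup_le_add _ _ _ _).trans (add_le_add (hfC y z) (hgD y z))

lemma apply_mem_lipschitzSubmodule (j : Fin m) :
    (fun t : Fin m → ℝ => t j) ∈ hΦ.lipschitzSubmodule := by
  refine ⟨isPHC_apply j, 1, zero_le_one, fun y z => ?_⟩
  rw [hΦ.map_proj, hΦ.map_proj, one_smul]
  exact single_le_sum (f := fun i => |y i - z i|) (fun i _ => abs_nonneg _) (mem_univ j)

lemma exists_abs_map_sub_map_le {h : (Fin m → ℝ) → ℝ} (hh : IsPHC h) {ε : ℝ} (hε : 0 < ε) :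
    ∃ C : ℝ, 0 ≤ C ∧ ∀ y z, |Φ y h - Φ z h| ≤ ε • ∑ j, |z j| + C • ∑ j, |y j - z j| := by
  obtain ⟨p, ⟨hp, C, hC, hpC⟩, hhp⟩ := hh.exists_mem_abs_sub_le (L := hΦ.lipschitzSubmodule)
    (fun _ hf => hf.1) (fun _ hf _ hg => hΦ.sup_mem_lipschitzSubmodule hf hg)
    hΦ.apply_mem_lipschitzSubmodule (half_pos hε)
  refine ⟨ε / 2 + C, by positivity, fun y z => ?_⟩
  have hy : ∑ j, |y j| ≤ ∑ j, |z j| + ∑ j, |y j - z j| := by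
    rw [← sum_add_distrib]
    exact sum_le_sum fun j _ => by simpa using abs_add_le (z j) (y j - z j)
  have hhp' : ∀ t, |p t - h t| ≤ ε / 2 * ∑ j, |t j| := fun t => by rw [abs_sub_comm]; exact hhp t
  calc |Φ y h - Φ z h| = |(Φ y h - Φ y p) + (Φ y p - Φ z p) + (Φ z p - Φ z h)| := by abel_nf
    _ ≤ (ε / 2) • ∑ j, |y j| + C • ∑ j, |y j - z j| + (ε / 2) • ∑ j, |z j| := by
        grw [abs_add_le, abs_add_le, hΦ.abs_map_sub_map_le y hh hp hhp, hpC y z,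
          hΦ.abs_map_sub_map_le z hp hh hhp']
    _ ≤ (ε / 2) • (∑ j, |z j| + ∑ j, |y j - z j|) + C • ∑ j, |y j - z j|
          + (ε / 2) • ∑ j, |z j| := by gcongr
    _ = ε • ∑ j, |z j| + (ε / 2 + C) • ∑ j, |y j - z j| := by module

end IsPHCalculus

theorem function_calculus_preserves_uniform_convergence_general
    {X : Type*}
    [Lattice X] [AddCommGroup X] [Module ℝ X]
    [CovariantClass X X (· + ·) (· ≤ ·)] [PosSMulMono ℝ X]
    -- the positively homogeneous continuous function calculus on `X`
    (Φ : ∀ m : ℕ, (Fin m → X) → ((Fin m → ℝ) → ℝ) → X)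
    (hΦadd : ∀ (m) (x : Fin m → X) (h g), IsPHC h → IsPHC g →
      Φ m x (h + g) = Φ m x h + Φ m x g)
    (hΦsmul : ∀ (m) (x : Fin m → X) (c : ℝ) (h), IsPHC h → Φ m x (c • h) = c • Φ m x h)
    (hΦsup : ∀ (m) (x : Fin m → X) (h g), IsPHC h → IsPHC g →
      Φ m x (h ⊔ g) = Φ m x h ⊔ Φ m x g)
    (hΦproj : ∀ (m) (x : Fin m → X) (k : Fin m), Φ m x (fun t => t k) = x k)
    {m : ℕ} (x : Fin m → ℕ → X) (x' : Fin m → X)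
    (hconv : ∀ j : Fin m, UnifConv (x j) (x' j)) :
    ∀ h : (Fin m → ℝ) → ℝ, IsPHC h →
      UnifConv (fun k => Φ m (fun j => x j k) h) (Φ m x' h) := by
  intro h hh
  have : IsOrderedAddMonoid X := { add_le_add_left := fun _ _ hab c => add_le_add hab le_rfl }
  have hΦ : IsPHCalculus (Φ m) := ⟨hΦadd m, hΦsmul m, hΦsup m, hΦproj m⟩
  exact unifConv_apply_of_abs_sub_le (fun ε hε => hΦ.exists_abs_map_sub_map_le hh hε) hconv

/-- Let `X` be an Archimedean vector lattice admitting a positively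
homogeneous continuous function calculus `Φ`, and suppose the sequences `(x_k^1), …, (x_k^m)`
converge uniformly to `x^1, …, x^m`. Then `(h(x_k^1,…,x_k^m))` converges uniformly to
`h(x^1,…,x^m)` for every `h ∈ ℋ_m`. -/
theorem function_calculus_preserves_uniform_convergence
    {X : Type*}
    [Lattice X] [AddCommGroup X] [Module ℝ X]
    [CovariantClass X X (· + ·) (· ≤ ·)] [PosSMulMono ℝ X]
    (harchX : ∀ x y : X, (∀ n : ℕ, n • x ≤ y) → x ≤ 0)
    -- the positively homogeneous continuous function calculus on `X`
    (Φ : ∀ m : ℕ, (Fin m → X) → ((Fin m → ℝ) → ℝ) → X)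
    (hΦadd : ∀ (m) (x : Fin m → X) (h g), IsPHC h → IsPHC g →
      Φ m x (h + g) = Φ m x h + Φ m x g)
    (hΦsmul : ∀ (m) (x : Fin m → X) (c : ℝ) (h), IsPHC h → Φ m x (c • h) = c • Φ m x h)
    (hΦsup : ∀ (m) (x : Fin m → X) (h g), IsPHC h → IsPHC g →
      Φ m x (h ⊔ g) = Φ m x h ⊔ Φ m x g)
    (hΦproj : ∀ (m) (x : Fin m → X) (k : Fin m), Φ m x (fun t => t k) = x k)
    {m : ℕ} (x : Fin m → ℕ → X) (x' : Fin m → X)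
    (hconv : ∀ j : Fin m, UnifConv (x j) (x' j)) :
    ∀ h : (Fin m → ℝ) → ℝ, IsPHC h →
      UnifConv (fun k => Φ m (fun j => x j k) h) (Φ m x' h) :=
  function_calculus_preserves_uniform_convergence_general Φ hΦadd hΦsmul hΦsup hΦproj x x' hconv
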